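/- arXiv:1901.09158 — 3 statements merged into one kernel-verified Lean document; each statement's English description precedes it below -/
import Mathlib

section
/- Let G ∈ Digraph(k) and G_j ∈ Digraph(n_j) for j = 1,...,k (simple directed graphs, i.e., irreflexive relations on vertex sets). Then the walk-tree construction intertwines composition: Walk(G(G_1,...,G_k)) = Walk(G)(Walk(G_1),...,Walk(G_k)), where on the left G(G_1,...,G_k) is the digraph composition and on the right is the tree-operad composition. -/
/-- The walk tree of a digraph: the empty string together with all strings
`j₁ … j_ℓ` such that `j_ℓ, j_{ℓ-1}, …, j₁` is a walk on the digraph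
(consecutive letters adjacent, read right to left). -/
def WalkSet {α : Type*} (R : α → α → Prop) : Set (List α) :=
  {L | L.Chain' (fun a b => R b a)}

/-- Operadic composition of rooted subtrees of string trees. -/
def Compose {k : ℕ} {n : Fin k → ℕ} (T : Set (List (Fin k)))
    (Ts : ∀ i : Fin k, Set (List (Fin (n i)))) :
    Set (List (Σ i : Fin k, Fin (n i))) :=
  { w | ∃ c : List (Σ i : Fin k, List (Fin (n i))),
      c.map Sigma.fst ∈ T ∧ (∀ p ∈ c, p.2 ∈ Ts p.1 ∧ p.2 ≠ []) ∧
      w = c.foldr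
        (fun p acc => p.2.map (fun x => (⟨p.1, x⟩ : Σ i : Fin k, Fin (n i))) ++ acc) [] }

/-- Composition of simple digraphs: on the disjoint union of the vertex sets,
put an edge from every vertex of `G_i` to every vertex of `G_j` whenever
`i ∼_G j`, and keep the edges of each `G_j`. -/
def DigraphCompose {k : ℕ} {n : Fin k → ℕ} (G : Fin k → Fin k → Prop)
    (Gs : ∀ i : Fin k, Fin (n i) → Fin (n i) → Prop) :
    (Σ i : Fin k, Fin (n i)) → (Σ i : Fin k, Fin (n i)) → Prop :=
  fun p q => G p.1 q.1 ∨
    ∃ (i : Fin k) (v w : Fin (n i)), p = ⟨i, v⟩ ∧ q = ⟨i, w⟩ ∧ Gs i v w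

/-! A walk in the composite digraph cuts into blocks: consecutive vertices stay in one block while
they are joined by an edge of some `G_j`, and every edge coming from `G` starts a new block. The
blocks are walks in the `G_j` and their labels form a walk in `G`, i.e. the walk is a decorated
string of the tree composition. Conversely, flattening a decorated string gives a walk, because the
last vertex of a block and the first vertex of the next one lie in `G`-adjacent blocks. -/

section
variable {k : ℕ} {n : Fin k → ℕ}

def flattenBlocks (c : List (Σ i : Fin k, List (Fin (n i)))) : List (Σ i : Fin k, Fin (n i)) :=
  c.flatMap fun p => p.2.map (Sigma.mk p.1)

/-- `c` is a string of `T` whose letters `i` carry nonempty strings of `Ts i`. -/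
def IsDecoration (T : Set (List (Fin k))) (Ts : ∀ i : Fin k, Set (List (Fin (n i))))
    (c : List (Σ i : Fin k, List (Fin (n i)))) : Prop :=
  c.map Sigma.fst ∈ T ∧ ∀ p ∈ c, p.2 ∈ Ts p.1 ∧ p.2 ≠ []

theorem mem_compose_iff {T : Set (List (Fin k))} {Ts : ∀ i : Fin k, Set (List (Fin (n i)))}
    {w : List (Σ i : Fin k, Fin (n i))} :
    w ∈ Compose T Ts ↔ ∃ c, IsDecoration T Ts c ∧ flattenBlocks c = w := by
  simp only [Compose, IsDecoration, flattenBlocks, Set.mem_ofPred_eq, List.foldr_append_eq_append,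
    List.append_nil, List.flatMap_def, and_assoc, eq_comm]

theorem mem_walkSet_iff {α : Type*} {R : α → α → Prop} {l : List α} :
    l ∈ WalkSet R ↔ l.IsChain (fun a b => R b a) :=
  Iff.rfl

theorem mem_walkSet_cons_iff {α : Type*} {R : α → α → Prop} {a : α} {l : List α} :
    a :: l ∈ WalkSet R ↔ (∀ b ∈ l.head?, R b a) ∧ l ∈ WalkSet R := by
  simp only [mem_walkSet_iff, List.isChain_cons]

variable {G : Fin k → Fin k → Prop} {Gs : ∀ i : Fin k, Fin (n i) → Fin (n i) → Prop}

theorem flattenBlocks_mem_walkSet {c : List (Σ i : Fin k, List (Fin (n i)))}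
    (hc : IsDecoration (WalkSet G) (fun i => WalkSet (Gs i)) c) :
    flattenBlocks c ∈ WalkSet (DigraphCompose G Gs) := by
  obtain ⟨hG, hGs⟩ := hc
  simp only [mem_walkSet_iff] at hG hGs ⊢
  rw [flattenBlocks, List.flatMap_def, List.isChain_flatten, List.forall_mem_map, List.isChain_map]
  · refine ⟨fun p hp => ?_, ?_⟩
    · rw [List.isChain_map]
      exact (hGs p hp).1.imp fun a b h => Or.inr ⟨p.1, b, a, rfl, rfl, h⟩
    · rw [List.isChain_map] at hG
      refine hG.imp fun p q hpq x hx y hy => Or.inl ?_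
      simp only [List.getLast?_map, List.head?_map, Option.mem_def, Option.map_eq_some_iff] at hx hy
      obtain ⟨-, -, rfl⟩ := hx
      obtain ⟨-, -, rfl⟩ := hy
      exact hpq
  · simp only [List.mem_map, List.map_eq_nil_iff, not_exists, not_and]
    exact fun p hp => (hGs p hp).2

theorem IsDecoration.cons_singleton {c : List (Σ i : Fin k, List (Fin (n i)))}
    (hc : IsDecoration (WalkSet G) (fun i => WalkSet (Gs i)) c) {a : Σ i : Fin k, Fin (n i)}
    (ha : ∀ j ∈ (c.map Sigma.fst).head?, G j a.1) :
    IsDecoration (WalkSet G) (fun i => WalkSet (Gs i)) (⟨a.1, [a.2]⟩ :: c) :=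
  ⟨mem_walkSet_cons_iff.2 ⟨ha, hc.1⟩,
    List.forall_mem_cons.2 ⟨⟨List.isChain_singleton _, List.cons_ne_nil _ _⟩, hc.2⟩⟩

theorem IsDecoration.cons_head {i : Fin k} {v x : Fin (n i)} {l : List (Fin (n i))}
    {c : List (Σ i : Fin k, List (Fin (n i)))}
    (hc : IsDecoration (WalkSet G) (fun i => WalkSet (Gs i)) (⟨i, x :: l⟩ :: c))
    (h : Gs i x v) :
    IsDecoration (WalkSet G) (fun i => WalkSet (Gs i)) (⟨i, v :: x :: l⟩ :: c) :=
  ⟨hc.1, List.forall_mem_cons.2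
    ⟨⟨mem_walkSet_cons_iff.2 ⟨by simpa using h, (hc.2 _ List.mem_cons_self).1⟩,
        List.cons_ne_nil _ _⟩,
      fun p hp => hc.2 p (List.mem_cons_of_mem _ hp)⟩⟩

theorem exists_decoration_cons {c : List (Σ i : Fin k, List (Fin (n i)))}
    (hc : IsDecoration (WalkSet G) (fun i => WalkSet (Gs i)) c) {a : Σ i : Fin k, Fin (n i)}
    (ha : ∀ b ∈ (flattenBlocks c).head?, DigraphCompose G Gs b a) :
    ∃ c', IsDecoration (WalkSet G) (fun i => WalkSet (Gs i)) c' ∧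
      flattenBlocks c' = a :: flattenBlocks c := by
  -- `a` starts a new block along an edge of `G`, or extends the first block along an edge of `G_j`.
  rcases c with _ | ⟨⟨j, _ | ⟨x, l⟩⟩, c⟩
  · exact ⟨_, hc.cons_singleton (by simp), rfl⟩
  · exact absurd rfl (hc.2 _ List.mem_cons_self).2
  · simp only [flattenBlocks, List.flatMap_cons, List.map_cons, List.cons_append, List.head?_cons,
      Option.mem_def, Option.some.injEq, forall_eq'] at ha
    rcases ha with hG | ⟨i, v, w, hx, rfl, h⟩
    · exact ⟨_, hc.cons_singleton (by simpa using hG), rfl⟩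
    · cases hx
      exact ⟨_, hc.cons_head h, rfl⟩

theorem exists_decoration_of_mem_walkSet {w : List (Σ i : Fin k, Fin (n i))}
    (hw : w ∈ WalkSet (DigraphCompose G Gs)) :
    ∃ c, IsDecoration (WalkSet G) (fun i => WalkSet (Gs i)) c ∧ flattenBlocks c = w := by
  induction w with
  | nil => exact ⟨[], ⟨List.isChain_nil, by simp⟩, rfl⟩
  | cons a w ih =>
    obtain ⟨ha, hw⟩ := mem_walkSet_cons_iff.1 hw
    obtain ⟨c, hc, rfl⟩ := ih hw
    exact exists_decoration_cons hc ha
end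

theorem stmt15_general {k : ℕ} {n : Fin k → ℕ} (G : Fin k → Fin k → Prop)
    (Gs : ∀ i : Fin k, Fin (n i) → Fin (n i) → Prop) :
    WalkSet (DigraphCompose G Gs) = Compose (WalkSet G) (fun i => WalkSet (Gs i)) := by
  ext w
  rw [mem_compose_iff]
  constructor
  · exact exists_decoration_of_mem_walkSet
  · rintro ⟨c, hc, rfl⟩
    exact flattenBlocks_mem_walkSet hc

/-- The walk-tree construction intertwines digraph composition and tree
composition: `Walk(G(G₁,…,G_k)) = Walk(G)(Walk(G₁),…,Walk(G_k))`. -/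
theorem stmt15 {k : ℕ} {n : Fin k → ℕ} (G : Fin k → Fin k → Prop)
    (Gs : ∀ i : Fin k, Fin (n i) → Fin (n i) → Prop)
    (hG : ∀ i, ¬ G i i) (hGs : ∀ i v, ¬ Gs i v v) :
    WalkSet (DigraphCompose G Gs) = Compose (WalkSet G) (fun i => WalkSet (Gs i)) :=
  stmt15_general G Gs
end

section
/- Let ψ : {1,2,3} → {1,2} be given by ψ(1) = 1, ψ(2) = 2, ψ(3) = 2, and let ψ_* act letterwise on strings. Let T_sub ⊆ T_{2,free} be the rooted subtree of all alternating strings on {1,2} that do not end with the letter 2, let T_{2,mono†} = {∅, 1, 2, 12} be the anti-monotone tree, and let id denote the 1-letter tree {∅, 1}. Then ψ_* restricts to a bijection (indeed a rooted graph isomorphism) from the composed tree T_{2,mono†}(T_sub, id) onto T_{2,free}. -/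
/-!
Every alternating word on `{1,2}` is either a word of `T_sub` or such a word followed by the
letter `2`, and the composed tree splits the same way: the copy of `T_sub` itself, and that copy
followed by the letter `3`. Since `ψ` fixes `1, 2` and sends `3` to `2`, the map `ψ_*` matches
the two halves.
-/

/-- The subordination tree `T_sub ⊆ T_{2,free}`: all alternating strings on
`{1,2}` (encoded as `Fin 2`) that do not end with the letter `2` (encoded `1`). -/
def Tsub : Set (List (Fin 2)) :=
  {s | s.Chain' (· ≠ ·) ∧ s.getLast? ≠ some 1}

/-- The composed tree `T_{2,mono†}(T_sub, id)` on the alphabet `{1,2,3}`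
(encoded as `Fin 3`): explicitly
`{∅} ∪ {3} ∪ {s : s ∈ T_sub ∖ {∅}} ∪ {s3 : s ∈ T_sub ∖ {∅}}`. -/
def Tcomp : Set (List (Fin 3)) :=
  {w | w = [] ∨ w = [(2 : Fin 3)] ∨
    (∃ s ∈ Tsub, s ≠ [] ∧ w = s.map Fin.castSucc) ∨
    (∃ s ∈ Tsub, s ≠ [] ∧ w = s.map Fin.castSucc ++ [(2 : Fin 3)])}

/-- The map `ψ : {1,2,3} → {1,2}` with `ψ(1)=1, ψ(2)=2, ψ(3)=2`. -/
def psiMap : Fin 3 → Fin 2 := fun j => if j = 0 then 0 else 1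

open Set List

theorem List.isChain_ne_append_singleton_iff {α : Type*} {s : List α} {a : α} :
    (s ++ [a]).IsChain (· ≠ ·) ↔ s.IsChain (· ≠ ·) ∧ s.getLast? ≠ some a := by
  simp only [isChain_append, IsChain.singleton, head?_cons, Option.mem_def, Option.some.injEq,
    forall_eq', true_and]
  refine and_congr_right fun _ => ⟨fun h hlast => h a hlast rfl, ?_⟩
  rintro h x hx rfl
  exact h hx

lemma nil_mem_Tsub : ([] : List (Fin 2)) ∈ Tsub := ⟨isChain_nil, by simp⟩

lemma append_one_isChain_ne_iff {s : List (Fin 2)} : (s ++ [1]).IsChain (· ≠ ·) ↔ s ∈ Tsub :=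
  isChain_ne_append_singleton_iff

lemma setOf_chain_ne_eq : {t : List (Fin 2) | t.Chain' (· ≠ ·)} = Tsub ∪ (· ++ [1]) '' Tsub := by
  ext t
  constructor
  · intro ht
    by_cases hlast : t.getLast? = some 1
    · obtain ⟨s, rfl⟩ := getLast?_eq_some_iff.mp hlast
      exact Or.inr ⟨s, append_one_isChain_ne_iff.mp ht, rfl⟩
    · exact Or.inl ⟨ht, hlast⟩
  · rintro (hs | ⟨s, hs, rfl⟩)
    · exact hs.1
    · exact append_one_isChain_ne_iff.mpr hs

lemma Tcomp_eq :
    Tcomp = map Fin.castSucc '' Tsub ∪ (fun s => s.map Fin.castSucc ++ [2]) '' Tsub := by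
  ext w
  constructor
  · rintro (rfl | rfl | ⟨s, hs, -, rfl⟩ | ⟨s, hs, -, rfl⟩)
    · exact Or.inl ⟨[], nil_mem_Tsub, rfl⟩
    · exact Or.inr ⟨[], nil_mem_Tsub, rfl⟩
    · exact Or.inl ⟨s, hs, rfl⟩
    · exact Or.inr ⟨s, hs, rfl⟩
  · rintro (⟨s, hs, rfl⟩ | ⟨s, hs, rfl⟩) <;> rcases eq_or_ne s [] with rfl | hne
    · exact Or.inl rfl
    · exact Or.inr (Or.inr (Or.inl ⟨s, hs, hne, rfl⟩))
    · exact Or.inr (Or.inl rfl)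
    · exact Or.inr (Or.inr (Or.inr ⟨s, hs, hne, rfl⟩))

lemma psiMap_castSucc (a : Fin 2) : psiMap a.castSucc = a := by
  fin_cases a <;> rfl

lemma map_psiMap_map_castSucc (s : List (Fin 2)) : (s.map Fin.castSucc).map psiMap = s := by
  simp [map_map, Function.comp_def, psiMap_castSucc]

lemma map_psiMap_map_castSucc_append_two (s : List (Fin 2)) :
    (s.map Fin.castSucc ++ [2]).map psiMap = s ++ [1] := by
  rw [map_append, map_psiMap_map_castSucc]
  rfl

/-- Reads a final letter `2` of a word on `{1,2}` as the letter `3`. -/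
def psiMapInv (t : List (Fin 2)) : List (Fin 3) :=
  if t.getLast? = some 1 then t.dropLast.map Fin.castSucc ++ [2] else t.map Fin.castSucc

lemma psiMapInv_of_mem_Tsub {s : List (Fin 2)} (hs : s ∈ Tsub) :
    psiMapInv s = s.map Fin.castSucc :=
  if_neg hs.2

lemma psiMapInv_append_one (s : List (Fin 2)) :
    psiMapInv (s ++ [1]) = s.map Fin.castSucc ++ [2] := by
  simp [psiMapInv]

/-- The letterwise map `ψ_*` restricts to a bijection (a rooted graph
isomorphism) from the composed tree `T_{2,mono†}(T_sub, id)` onto `T_{2,free}`. -/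
theorem stmt16 :
    Set.BijOn (List.map psiMap) Tcomp {s : List (Fin 2) | s.Chain' (· ≠ ·)} := by
  rw [Tcomp_eq, setOf_chain_ne_eq]
  refine InvOn.bijOn (f' := psiMapInv) ⟨?_, ?_⟩ ?_ ?_
  · rintro _ (⟨s, hs, rfl⟩ | ⟨s, -, rfl⟩)
    · rw [map_psiMap_map_castSucc, psiMapInv_of_mem_Tsub hs]
    · rw [map_psiMap_map_castSucc_append_two, psiMapInv_append_one]
  · rintro s (hs | ⟨s, -, rfl⟩)
    · rw [psiMapInv_of_mem_Tsub hs, map_psiMap_map_castSucc]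
    · rw [psiMapInv_append_one, map_psiMap_map_castSucc_append_two]
  · rintro _ (⟨s, hs, rfl⟩ | ⟨s, hs, rfl⟩)
    · exact Or.inl (by rwa [map_psiMap_map_castSucc])
    · exact Or.inr ⟨s, hs, (map_psiMap_map_castSucc_append_two s).symm⟩
  · rintro s (hs | ⟨s, hs, rfl⟩)
    · exact Or.inl ⟨s, hs, (psiMapInv_of_mem_Tsub hs).symm⟩
    · exact Or.inr ⟨s, hs, (psiMapInv_append_one s).symm⟩
end

section
/- Let T ∈ Tree(N) with n = |[N] ∩ T| ≥ 2, and let T^{n^k} be the k-fold self-composition of T (T^{n^1} = T and T^{n^{k+1}} = T(T^{n^k},...,T^{n^k}) with N arguments). Then for every string s ∈ T^{n^k}, the number of letters j ∈ [N^k] with js ∈ T^{n^k} is at most (N−1)(n^k − 1)/(n−1) if s ≠ ∅, and equals n^k if s = ∅. -/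
/-- A rooted subtree of the tree of alternating strings on alphabet `α`. -/
def IsRootedSubtree {α : Type*} (S : Set (List α)) : Prop :=
  (∀ s ∈ S, s.Chain' (· ≠ ·)) ∧ [] ∈ S ∧ ∀ s ∈ S, s.tail ∈ S

/-- The iterated self-composition `T^{n^k}` of a rooted subtree `T` of
`T_{N,free}`, realized on the alphabet `[N]^k` (encoded as `Fin k → Fin N`):
`T^{n^0}` is the identity tree on one letter, and `T^{n^{k+1}}` is obtained
from a string of `T` by substituting a nonempty string of `T^{n^k}` for each
letter, prepending the outer letter to each inner one. -/
def iterTree {N : ℕ} (T : Set (List (Fin N))) : (k : ℕ) → Set (List (Fin k → Fin N))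
  | 0 => {w | w = [] ∨ ∃ c, w = [c]}
  | k + 1 =>
    { w | ∃ c : List (Fin N × List (Fin k → Fin N)),
        c.map Prod.fst ∈ T ∧ (∀ p ∈ c, p.2 ∈ iterTree T k ∧ p.2 ≠ []) ∧
        w = c.foldr (fun p acc => p.2.map (fun v => Fin.cons p.1 v) ++ acc) [] }

namespace Stmt17Aux

variable {N : ℕ}

/-- Flattening of a block decomposition. -/
def flat {k : ℕ} (c : List (Fin N × List (Fin k → Fin N))) : List (Fin (k + 1) → Fin N) :=
  c.foldr (fun p acc => p.2.map (fun v => Fin.cons p.1 v) ++ acc) []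

@[simp] lemma flat_nil {k : ℕ} : flat ([] : List (Fin N × List (Fin k → Fin N))) = [] := rfl

lemma flat_cons {k : ℕ} (a : Fin N) (t : List (Fin k → Fin N)) (r) :
    flat ((a, t) :: r) = t.map (fun v => Fin.cons a v) ++ flat r := rfl

/-- Canonical block decomposition (maximal runs of constant head). -/
def deco {k : ℕ} : List (Fin (k + 1) → Fin N) → List (Fin N × List (Fin k → Fin N))
  | [] => []
  | j :: s =>
    match deco s with
    | [] => [(j 0, [Fin.tail j])]
    | (a, t) :: r =>
      if j 0 = a then (a, Fin.tail j :: t) :: r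
      else (j 0, [Fin.tail j]) :: (a, t) :: r

@[simp] lemma deco_nil {k : ℕ} : deco ([] : List (Fin (k + 1) → Fin N)) = [] := rfl

lemma deco_cons_of_nil {k : ℕ} (j : Fin (k + 1) → Fin N) (s) (h : deco s = []) :
    deco (j :: s) = [(j 0, [Fin.tail j])] := by
  rw [deco, h]

lemma deco_cons_of_cons {k : ℕ} (j : Fin (k + 1) → Fin N) (s) (a t r)
    (h : deco s = (a, t) :: r) :
    deco (j :: s) = if j 0 = a then (a, Fin.tail j :: t) :: r
      else (j 0, [Fin.tail j]) :: (a, t) :: r := by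
  rw [deco, h]

lemma deco_eq_nil {k : ℕ} {s : List (Fin (k + 1) → Fin N)} (h : deco s = []) : s = [] := by
  cases s with
  | nil => rfl
  | cons j s =>
    exfalso
    rcases hd : deco s with - | ⟨⟨a, t⟩, r⟩
    · rw [deco_cons_of_nil j s hd] at h; simp at h
    · rw [deco_cons_of_cons j s a t r hd] at h
      split at h <;> simp at h

lemma snd_ne_nil {k : ℕ} (s : List (Fin (k + 1) → Fin N)) :
    ∀ p ∈ deco s, p.2 ≠ [] := by
  induction s with
  | nil => simp
  | cons j s ih =>
    intro p hp
    rcases hd : deco s with - | ⟨⟨a, t⟩, r⟩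
    · rw [deco_cons_of_nil j s hd] at hp
      simp at hp; subst hp; simp
    · rw [deco_cons_of_cons j s a t r hd] at hp
      rw [hd] at ih
      by_cases hja : j 0 = a
      · rw [if_pos hja] at hp
        rcases List.mem_cons.mp hp with hp | hp
        · subst hp; simp
        · exact ih p (List.mem_cons_of_mem _ hp)
      · rw [if_neg hja] at hp
        rcases List.mem_cons.mp hp with hp | hp
        · subst hp; simp
        · exact ih p hp

lemma flat_deco {k : ℕ} (s : List (Fin (k + 1) → Fin N)) : flat (deco s) = s := by
  induction s with
  | nil => rfl
  | cons j s ih =>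
    rcases hd : deco s with - | ⟨⟨a, t⟩, r⟩
    · have hs : s = [] := deco_eq_nil hd
      subst hs
      rw [deco_cons_of_nil j [] rfl, flat_cons]
      simp [Fin.cons_self_tail]
    · rw [hd] at ih
      rw [deco_cons_of_cons j s a t r hd]
      split
      · rename_i hj
        rw [flat_cons, List.map_cons, List.cons_append]
        have hj' : Fin.cons a (Fin.tail j) = j := by rw [← hj, Fin.cons_self_tail]
        rw [hj', ← flat_cons a t r, ih]
      · rw [flat_cons]
        simp only [List.map_cons, List.map_nil, Fin.cons_self_tail]
        rw [List.singleton_append, ih]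

lemma deco_map_append {k : ℕ} (a : Fin N) :
    ∀ (t : List (Fin k → Fin N)) (w : List (Fin (k + 1) → Fin N)), t ≠ [] →
      (∀ b t' r, deco w = (b, t') :: r → b ≠ a) →
      deco (t.map (fun v => Fin.cons a v) ++ w) = (a, t) :: deco w := by
  intro t
  induction t with
  | nil => intro w h; exact absurd rfl h
  | cons v t ih =>
    intro w _ hw
    cases t with
    | nil =>
      simp only [List.map_cons, List.map_nil, List.nil_append, List.cons_append]
      rcases hd : deco w with - | ⟨⟨b, t'⟩, r⟩
      · rw [deco_cons_of_nil _ _ hd]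
        simp
      · rw [deco_cons_of_cons _ _ b t' r hd]
        have hba : b ≠ a := hw b t' r hd
        rw [if_neg (by simp [hba.symm])]
        simp
    | cons v' t'' =>
      have ih' := ih w (by simp) hw
      simp only [List.map_cons, List.cons_append] at ih' ⊢
      rw [deco_cons_of_cons _ _ a (v' :: t'') (deco w) ih']
      rw [if_pos (by simp)]
      simp

lemma deco_flat {k : ℕ} (c : List (Fin N × List (Fin k → Fin N)))
    (hc : (c.map Prod.fst).Chain' (· ≠ ·)) (hne : ∀ p ∈ c, p.2 ≠ []) :
    deco (flat c) = c := by
  induction c with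
  | nil => rfl
  | cons p r ih =>
    obtain ⟨a, t⟩ := p
    have hc' : (r.map Prod.fst).Chain' (· ≠ ·) := by
      simp only [List.map_cons] at hc
      exact hc.tail
    have ihr : deco (flat r) = r :=
      ih hc' (fun q hq => hne q (List.mem_cons_of_mem _ hq))
    rw [flat_cons]
    rw [deco_map_append a t (flat r) (hne (a, t) (List.mem_cons_self)) ?_, ihr]
    intro b t' r' hb
    rw [ihr] at hb
    subst hb
    simp only [List.map_cons, List.isChain_cons_cons] at hc
    exact (List.isChain_cons_cons.mp hc).1.symm

variable (T : Set (List (Fin N)))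

lemma mem_succ_iff (hT : IsRootedSubtree T) {k : ℕ} (s : List (Fin (k + 1) → Fin N)) :
    s ∈ iterTree T (k + 1) ↔
      ((deco s).map Prod.fst ∈ T ∧ ∀ p ∈ deco s, p.2 ∈ iterTree T k) := by
  constructor
  · rintro ⟨c, h1, h2, h3⟩
    have hs : s = flat c := h3
    have hdc : deco (flat c) = c :=
      deco_flat c (hT.1 _ h1) (fun p hp => (h2 p hp).2)
    rw [hs, hdc]
    exact ⟨h1, fun p hp => (h2 p hp).1⟩
  · rintro ⟨h1, h2⟩
    exact ⟨deco s, h1, fun p hp => ⟨h2 p hp, snd_ne_nil s p hp⟩, (flat_deco s).symm⟩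

lemma mem_singleton_succ (hT : IsRootedSubtree T) {k : ℕ} (j : Fin (k + 1) → Fin N) :
    [j] ∈ iterTree T (k + 1) ↔ [j 0] ∈ T ∧ [Fin.tail j] ∈ iterTree T k := by
  rw [mem_succ_iff T hT, deco_cons_of_nil j [] rfl]
  simp

lemma cons_mem_succ_iff (hT : IsRootedSubtree T) {k : ℕ}
    {s : List (Fin (k + 1) → Fin N)} {a : Fin N} {t : List (Fin k → Fin N)} {r}
    (hd : deco s = (a, t) :: r) (hs : s ∈ iterTree T (k + 1))
    (j : Fin (k + 1) → Fin N) :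
    j :: s ∈ iterTree T (k + 1) ↔
      ((j 0 = a ∧ Fin.tail j :: t ∈ iterTree T k) ∨
       (j 0 ≠ a ∧ j 0 :: a :: r.map Prod.fst ∈ T ∧ [Fin.tail j] ∈ iterTree T k)) := by
  obtain ⟨hu, hall⟩ := (mem_succ_iff T hT s).mp hs
  rw [hd] at hu hall
  simp only [List.map_cons] at hu
  have ht : t ∈ iterTree T k := hall (a, t) (List.mem_cons_self)
  have hr : ∀ p ∈ r, p.2 ∈ iterTree T k := fun p hp => hall p (List.mem_cons_of_mem _ hp)
  rw [mem_succ_iff T hT, deco_cons_of_cons j s a t r hd]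
  by_cases hj : j 0 = a
  · rw [if_pos hj]
    simp only [List.map_cons, List.forall_mem_cons]
    constructor
    · rintro ⟨-, h2, -⟩; exact Or.inl ⟨hj, h2⟩
    · rintro (⟨-, h2⟩ | ⟨hn, -⟩)
      · exact ⟨hu, h2, hr⟩
      · exact absurd hj hn
  · rw [if_neg hj]
    simp only [List.map_cons, List.forall_mem_cons]
    constructor
    · rintro ⟨h1, h2, -, -⟩; exact Or.inr ⟨hj, h1, h2⟩
    · rintro (⟨h, -⟩ | ⟨-, h1, h2⟩)
      · exact absurd h hj
      · exact ⟨h1, h2, ht, hr⟩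

lemma ncard_prod' {α β : Type*} (A : Set α) (B : Set β) :
    (A ×ˢ B).ncard = A.ncard * B.ncard := by
  rw [← Nat.card_coe_set_eq, ← Nat.card_coe_set_eq, ← Nat.card_coe_set_eq, ← Nat.card_prod]
  exact Nat.card_congr (Equiv.Set.prod A B)

lemma ncard_cons_set {k : ℕ} (A : Set (Fin N)) (B : Set (Fin k → Fin N)) :
    {j : Fin (k + 1) → Fin N | j 0 ∈ A ∧ Fin.tail j ∈ B}.ncard = A.ncard * B.ncard := by
  have himg : {j : Fin (k + 1) → Fin N | j 0 ∈ A ∧ Fin.tail j ∈ B}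
      = (fun p : Fin N × (Fin k → Fin N) => Fin.cons (α := fun _ => Fin N) p.1 p.2) '' (A ×ˢ B) := by
    ext j
    constructor
    · rintro ⟨h1, h2⟩
      exact ⟨(j 0, Fin.tail j), ⟨h1, h2⟩, Fin.cons_self_tail j⟩
    · rintro ⟨⟨b, v⟩, ⟨h1, h2⟩, rfl⟩
      refine ⟨by simpa using h1, by simpa using h2⟩
  have hinj : Function.Injective (fun p : Fin N × (Fin k → Fin N) => Fin.cons (α := fun _ => Fin N) p.1 p.2) := by
    rintro ⟨b, v⟩ ⟨b', v'⟩ h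
    have h0 : b = b' := by simpa using congrFun h 0
    have h1 : v = v' := by
      have := congrArg Fin.tail h
      simpa using this
    simp [h0, h1]
  rw [himg, Set.ncard_image_of_injective _ hinj, ncard_prod']

lemma ncard_ne (a : Fin N) : {b : Fin N | b ≠ a}.ncard = N - 1 := by
  have : {b : Fin N | b ≠ a} = Set.univ \ {a} := by
    ext b; simp
  rw [this, Set.ncard_diff (Set.subset_univ _), Set.ncard_univ, Set.ncard_singleton,
    Nat.card_eq_fintype_card, Fintype.card_fin]

end Stmt17Aux

open Stmt17Aux in
/-- Degree bound for iterated compositions: for `s ∈ T^{n^k}`, the number of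
letters `j` with `js ∈ T^{n^k}` is at most `((N−1)/(n−1))·n^k`; more precisely
for `s ≠ ∅` it is at most `(N−1)(n^k−1)/(n−1)`, and for `s = ∅` it equals `n^k`
(inequalities cleared of denominators by multiplying by `n − 1 > 0`). -/
theorem stmt17 {N : ℕ} (T : Set (List (Fin N))) (hT : IsRootedSubtree T)
    (n : ℕ) (hn : {j : Fin N | [j] ∈ T}.ncard = n) (hn2 : 2 ≤ n) (k : ℕ) :
    (∀ s ∈ iterTree T k,
      {j : Fin k → Fin N | j :: s ∈ iterTree T k}.ncard * (n - 1)
        ≤ (N - 1) * n ^ k) ∧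
    (∀ s ∈ iterTree T k, s ≠ [] →
      {j : Fin k → Fin N | j :: s ∈ iterTree T k}.ncard * (n - 1)
        ≤ (N - 1) * (n ^ k - 1)) ∧
    {j : Fin k → Fin N | [j] ∈ iterTree T k}.ncard = n ^ k := by
  classical
  have hNn : n ≤ N := by
    rw [← hn]
    have h := Set.ncard_le_ncard (Set.subset_univ {j : Fin N | [j] ∈ T}) Set.finite_univ
    simpa [Set.ncard_univ, Nat.card_eq_fintype_card] using h
  have main : ∀ k : ℕ, (∀ s ∈ iterTree T k, s ≠ [] →
      {j : Fin k → Fin N | j :: s ∈ iterTree T k}.ncard * (n - 1)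
        ≤ (N - 1) * (n ^ k - 1)) ∧
      {j : Fin k → Fin N | [j] ∈ iterTree T k}.ncard = n ^ k := by
    intro k
    induction k with
    | zero =>
      constructor
      · intro s hs hne
        have hs' : ∃ c, s = [c] := by
          rcases hs with h | h
          · exact absurd h hne
          · exact h
        obtain ⟨c, rfl⟩ := hs'
        have h0 : {j : Fin 0 → Fin N | j :: [c] ∈ iterTree T 0} = ∅ := by
          ext j
          simp [iterTree]
        simp [h0]
      · have h1 : {j : Fin 0 → Fin N | [j] ∈ iterTree T 0} = Set.univ := by
          ext j
          simp [iterTree]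
          exact Subsingleton.elim _ _
        rw [h1, Set.ncard_univ, pow_zero]
        simp [Nat.card_eq_fintype_card]
    | succ k ih =>
      obtain ⟨ih2, ih3⟩ := ih
      constructor
      · intro s hs hne
        rcases hd : deco s with - | ⟨⟨a, t⟩, r⟩
        · exact absurd (deco_eq_nil hd) hne
        · have ht : t ∈ iterTree T k := by
            obtain ⟨-, hall⟩ := (mem_succ_iff T hT s).mp hs
            rw [hd] at hall
            exact hall (a, t) (List.mem_cons_self)
          have htne : t ≠ [] := by
            have := snd_ne_nil s (a, t) (by rw [hd]; exact List.mem_cons_self)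
            simpa using this
          set A : Set (Fin (k + 1) → Fin N) :=
            {j | j 0 ∈ ({a} : Set (Fin N)) ∧ Fin.tail j ∈ {w | w :: t ∈ iterTree T k}} with hAdef
          set B : Set (Fin (k + 1) → Fin N) :=
            {j | j 0 ∈ {b : Fin N | b ≠ a} ∧ Fin.tail j ∈ {w | [w] ∈ iterTree T k}} with hBdef
          have hsub : {j : Fin (k + 1) → Fin N | j :: s ∈ iterTree T (k + 1)} ⊆ A ∪ B := by
            intro j hj
            rcases (cons_mem_succ_iff T hT hd hs j).mp hj with ⟨h1, h2⟩ | ⟨h1, h2, h3⟩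
            · exact Or.inl ⟨h1, h2⟩
            · exact Or.inr ⟨h1, h3⟩
          have hA : A.ncard = {w : Fin k → Fin N | w :: t ∈ iterTree T k}.ncard := by
            rw [hAdef, ncard_cons_set, Set.ncard_singleton, one_mul]
          have hB : B.ncard = (N - 1) * n ^ k := by
            rw [hBdef, ncard_cons_set, ncard_ne, ih3]
          have hkey : (n ^ k - 1) + n ^ k * (n - 1) = n ^ (k + 1) - 1 := by
            have h1 : 1 ≤ n ^ k := Nat.one_le_pow _ _ (by omega)
            have h2 : n ^ k * (n - 1) = n ^ (k + 1) - n ^ k := by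
              rw [Nat.mul_sub, mul_one, pow_succ]
            have h3 : n ^ k ≤ n ^ (k + 1) :=
              Nat.pow_le_pow_right (by omega) (by omega)
            omega
          calc {j : Fin (k + 1) → Fin N | j :: s ∈ iterTree T (k + 1)}.ncard * (n - 1)
              ≤ (A ∪ B).ncard * (n - 1) :=
                Nat.mul_le_mul_right _ (Set.ncard_le_ncard hsub (Set.toFinite _))
            _ ≤ (A.ncard + B.ncard) * (n - 1) :=
                Nat.mul_le_mul_right _ (Set.ncard_union_le A B)
            _ = A.ncard * (n - 1) + (N - 1) * (n ^ k * (n - 1)) := by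
                rw [hB]; ring
            _ ≤ (N - 1) * (n ^ k - 1) + (N - 1) * (n ^ k * (n - 1)) := by
                have := ih2 t ht htne
                rw [hA]
                omega
            _ = (N - 1) * ((n ^ k - 1) + n ^ k * (n - 1)) := by ring
            _ = (N - 1) * (n ^ (k + 1) - 1) := by rw [hkey]
      · have h1 : {j : Fin (k + 1) → Fin N | [j] ∈ iterTree T (k + 1)}
            = {j : Fin (k + 1) → Fin N |
                j 0 ∈ {b : Fin N | [b] ∈ T} ∧ Fin.tail j ∈ {w | [w] ∈ iterTree T k}} := by
          ext j
          rw [Set.mem_setOf_eq, mem_singleton_succ T hT]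
          rfl
        rw [h1, ncard_cons_set, hn, ih3, pow_succ, mul_comm]
  refine ⟨?_, (main k).1, (main k).2⟩
  intro s hs
  rcases eq_or_ne s [] with rfl | hne
  · rw [(main k).2, mul_comm]
    exact Nat.mul_le_mul_right _ (by omega)
  · exact le_trans ((main k).1 s hs hne) (Nat.mul_le_mul_left _ (Nat.sub_le _ _))
end
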